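/- Let E be a lextensive category and R a protocalibration closed under finite coproducts. Each hom-category Spn_R E(X, Y) has finite coproducts: the coproduct of spans (u : S → X, v : S → Y) and (u' : S' → X, v' : S' → Y) with u, u' ∈ R is the span ([u,u'] : S + S' → X, [v,v'] : S + S' → Y), and these coproducts are preserved by postcomposition with any span (r : T → Y, s : T → Z) with r ∈ R. -/

import Mathlib

/-!
A cofan of `R`-spans is a coproduct as soon as the cofan of their apexes is one in `E`: the legs
of the induced span morphism are forced by the legs on the two summands. The composite of
`([u,u'], [v,v'])` with `(r, s)` has apex the pullback of `r` along `[v,v']`, and the apex of the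
composite with `(u, v)` sits over it in a pullback square above the injection `S ⟶ S ⨿ S'`. In an
extensive category coproducts are stable under pullback, so these apexes again form a coproduct.
-/

open CategoryTheory Limits

universe v u

variable {E : Type u} [Category.{v} E]

/-- A span from `X` to `Y` with left leg in the class `R`:
a 1-morphism of the bicategory `Spn_R E`. -/
structure RSpan (R : MorphismProperty E) (X Y : E) : Type (max u v) where
  mid : E
  left : mid ⟶ X
  right : mid ⟶ Y
  memR : R left

/-- A morphism of `R`-spans (a 2-morphism of `Spn_R E`; for a category `E` the
isomorphism classes of span morphisms are just span morphisms). -/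
@[ext]
structure RSpanHom {R : MorphismProperty E} {X Y : E} (f g : RSpan R X Y) : Type v where
  hom : f.mid ⟶ g.mid
  wl : hom ≫ g.left = f.left := by aesop_cat
  wr : hom ≫ g.right = f.right := by aesop_cat

attribute [simp] RSpanHom.wl RSpanHom.wr

/-- The hom-category `Spn_R E (X, Y)`. -/
instance {R : MorphismProperty E} {X Y : E} : Category (RSpan R X Y) where
  Hom := RSpanHom
  id f := ⟨𝟙 f.mid, by simp, by simp⟩
  comp a b := ⟨a.hom ≫ b.hom, by rw [Category.assoc, b.wl, a.wl],
    by rw [Category.assoc, b.wr, a.wr]⟩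
  id_comp a := by apply RSpanHom.ext; simp [CategoryStruct.comp, CategoryStruct.id]
  comp_id a := by apply RSpanHom.ext; simp [CategoryStruct.comp, CategoryStruct.id]
  assoc a b c := by apply RSpanHom.ext; simp [CategoryStruct.comp]

/-- A span morphism, seen as a morphism in the hom-category. -/
def RSpanHom.toHom {R : MorphismProperty E} {X Y : E} {f g : RSpan R X Y}
    (a : RSpanHom f g) : f ⟶ g := a

variable [HasPullbacks E]

/-- Postcomposition in `Spn_R E` with an `R`-span `t` from `Y` to `Z`
(composition of spans is by pullback). -/
@[simps]
noncomputable def postcompSpan (R : MorphismProperty E)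
    (rcomp : ∀ {X Y Z : E} (f : X ⟶ Y) (g : Y ⟶ Z), R f → R g → R (f ≫ g))
    (rpb : ∀ {A B C : E} (i : A ⟶ B) (u : C ⟶ B), R u → R (pullback.fst i u))
    {X Y Z : E} (t : RSpan R Y Z) : RSpan R X Y ⥤ RSpan R X Z where
  obj f := ⟨pullback f.right t.left,
    pullback.fst f.right t.left ≫ f.left,
    pullback.snd f.right t.left ≫ t.right,
    rcomp _ _ (rpb f.right t.left t.memR) f.memR⟩
  map {f f'} a :=
    { hom := pullback.map f.right t.left f'.right t.left a.hom (𝟙 t.mid) (𝟙 Y)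
        (by simp [a.wr]) (by simp)
      wl := by
        rw [← Category.assoc, pullback.lift_fst, Category.assoc, a.wl]
      wr := by
        rw [← Category.assoc, pullback.lift_snd]
        simp }
  map_id f := by
    apply RSpanHom.ext
    apply pullback.hom_ext <;> simp [CategoryStruct.id]
  map_comp a b := by
    apply RSpanHom.ext
    apply pullback.hom_ext <;> simp [CategoryStruct.comp, pullback.map_comp]

noncomputable def RSpan.isColimitOfIsColimitMid {R : MorphismProperty E} {X Y : E}
    {f g h : RSpan R X Y} (i₁ : f ⟶ h) (i₂ : g ⟶ h)
    (hc : IsColimit (BinaryCofan.mk (RSpanHom.hom i₁) (RSpanHom.hom i₂))) :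
    IsColimit (BinaryCofan.mk i₁ i₂) :=
  BinaryCofan.IsColimit.mk _
    (fun a b => RSpanHom.toHom
      { hom := BinaryCofan.IsColimit.desc hc (RSpanHom.hom a) (RSpanHom.hom b)
        wl := BinaryCofan.IsColimit.hom_ext hc
          ((BinaryCofan.IsColimit.inl_desc_assoc hc _ _ _).trans (a.wl.trans i₁.wl.symm))
          ((BinaryCofan.IsColimit.inr_desc_assoc hc _ _ _).trans (b.wl.trans i₂.wl.symm))
        wr := BinaryCofan.IsColimit.hom_ext hc
          ((BinaryCofan.IsColimit.inl_desc_assoc hc _ _ _).trans (a.wr.trans i₁.wr.symm))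
          ((BinaryCofan.IsColimit.inr_desc_assoc hc _ _ _).trans (b.wr.trans i₂.wr.symm)) })
    (fun _ _ => RSpanHom.ext (BinaryCofan.IsColimit.inl_desc hc _ _))
    (fun _ _ => RSpanHom.ext (BinaryCofan.IsColimit.inr_desc hc _ _))
    (fun _ _ _ h₁ h₂ => RSpanHom.ext <| BinaryCofan.IsColimit.hom_ext hc
      ((congrArg RSpanHom.hom h₁).trans (BinaryCofan.IsColimit.inl_desc hc _ _).symm)
      ((congrArg RSpanHom.hom h₂).trans (BinaryCofan.IsColimit.inr_desc hc _ _).symm))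

theorem CategoryTheory.FinitaryPreExtensive.nonempty_isColimit_of_isPullback {C : Type*}
    [Category* C] [FinitaryPreExtensive C] {X Y P X' Y' P' : C} {inl : X ⟶ P} {inr : Y ⟶ P}
    (hc : IsColimit (BinaryCofan.mk inl inr))
    {inl' : X' ⟶ P'} {inr' : Y' ⟶ P'} {αX : X' ⟶ X} {αY : Y' ⟶ Y} {π : P' ⟶ P}
    (hl : IsPullback inl' αX π inl) (hr : IsPullback inr' αY π inr) :
    Nonempty (IsColimit (BinaryCofan.mk inl' inr')) :=
  FinitaryPreExtensive.universal' _ hc _ (mapPair αX αY) π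
    (by ext ⟨⟨⟩⟩; exacts [hl.w.symm, hr.w.symm]) (.of_discrete _)
    (fun ⟨j⟩ => by cases j; exacts [hl, hr])

theorem isPullback_pullbackMap_fst_fst {A B T Y : E} (i : A ⟶ B) {u : A ⟶ Y}
    {v : B ⟶ Y} (hu : i ≫ v = u) (w : T ⟶ Y) :
    IsPullback (pullback.map u w v w i (𝟙 T) (𝟙 Y) (by simp [hu]) (by simp))
      (pullback.fst u w) (pullback.fst v w) i := by
  refine .of_right ?_ (pullback.lift_fst _ _ _) (IsPullback.of_hasPullback v w).flip
  rw [pullback.lift_snd, Category.comp_id, hu]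
  exact (IsPullback.of_hasPullback u w).flip

/-- Let `E` be lextensive and `R` a protocalibration closed under finite coproducts.
Each hom-category `Spn_R E (X, Y)` has finite (binary) coproducts: the coproduct of
spans `(u, v)` and `(u', v')` is `([u,u'] : S ⨿ S' ⟶ X, [v,v'] : S ⨿ S' ⟶ Y)` with
injections induced by the coproduct injections, and these coproducts are preserved by
postcomposition with any `R`-span `(r : T ⟶ Y, s : T ⟶ Z)` with `r ∈ R`. -/
theorem RSpan_binary_coproducts_and_postcomp_preserves
    [FinitaryExtensive E]
    (R : MorphismProperty E)
    (rcomp : ∀ {X Y Z : E} (f : X ⟶ Y) (g : Y ⟶ Z), R f → R g → R (f ≫ g))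
    (rpb : ∀ {A B C : E} (i : A ⟶ B) (u : C ⟶ B), R u → R (pullback.fst i u))
    (rdesc : ∀ {X Y Z : E} (f : X ⟶ Z) (g : Y ⟶ Z), R f → R g → R (coprod.desc f g))
    {X Y Z : E} (f g : RSpan R X Y) (t : RSpan R Y Z) :
    Nonempty (IsColimit (BinaryCofan.mk
      (RSpanHom.toHom (f := f)
        (g := ⟨f.mid ⨿ g.mid, coprod.desc f.left g.left, coprod.desc f.right g.right,
          rdesc _ _ f.memR g.memR⟩)
        ⟨coprod.inl, by exact coprod.inl_desc _ _, by exact coprod.inl_desc _ _⟩)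
      (RSpanHom.toHom (f := g)
        (g := ⟨f.mid ⨿ g.mid, coprod.desc f.left g.left, coprod.desc f.right g.right,
          rdesc _ _ f.memR g.memR⟩)
        ⟨coprod.inr, by exact coprod.inr_desc _ _, by exact coprod.inr_desc _ _⟩))) ∧
    Nonempty (IsColimit (BinaryCofan.mk
      ((postcompSpan R rcomp rpb t).map (RSpanHom.toHom ⟨coprod.inl, by exact coprod.inl_desc _ _, by exact coprod.inl_desc _ _⟩))
      ((postcompSpan R rcomp rpb t).map
        (RSpanHom.toHom (f := g)
          (g := ⟨f.mid ⨿ g.mid, coprod.desc f.left g.left, coprod.desc f.right g.right,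
            rdesc _ _ f.memR g.memR⟩)
          ⟨coprod.inr, by exact coprod.inr_desc _ _, by exact coprod.inr_desc _ _⟩)))) := by
  refine ⟨⟨RSpan.isColimitOfIsColimitMid _ _ (coprodIsCoprod f.mid g.mid)⟩, ?_⟩
  obtain ⟨hc⟩ := FinitaryPreExtensive.nonempty_isColimit_of_isPullback
    (coprodIsCoprod f.mid g.mid)
    (isPullback_pullbackMap_fst_fst coprod.inl (coprod.inl_desc f.right g.right) t.left)
    (isPullback_pullbackMap_fst_fst coprod.inr (coprod.inr_desc f.right g.right) t.left)
  exact ⟨RSpan.isColimitOfIsColimitMid _ _ hc⟩
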